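/- arXiv:1508.07154 — 4 statements merged into one kernel-verified Lean document; each statement's English description precedes it below -/
import Mathlib

section
/- Let c ≥ 0 be a real number and let G be a c-almost-complete graph on n vertices. Then for every integer m with max{3, 2c + 2} ≤ m ≤ n, G contains a cycle of length exactly m. -/
open SimpleGraph

/-- The largest even integer not greater than `x`. -/
noncomputable def evenFloor (x : ℝ) : ℤ := 2 * ⌊x / 2⌋

/-- The largest odd integer not greater than `x`. -/
noncomputable def oddFloor (x : ℝ) : ℤ := 2 * ⌊(x - 1) / 2⌋ + 1

/-- `G` contains a cycle on exactly `m` vertices. -/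
def HasCycleLen {V : Type*} (G : SimpleGraph V) (m : ℕ) : Prop :=
  ∃ (v : V) (w : G.Walk v v), w.IsCycle ∧ w.length = m

/-- The colour-`i` subgraph of the complete graph on `V` whose edges are coloured by `χ`. -/
def colourGraph {V : Type*} (χ : Sym2 V → Fin 3) (i : Fin 3) : SimpleGraph V where
  Adj u v := u ≠ v ∧ χ s(u, v) = i
  symm := ⟨by
    intro u v h
    refine ⟨h.1.symm, ?_⟩
    rw [Sym2.eq_swap]
    exact h.2⟩
  loopless := ⟨fun u h => h.1 rfl⟩

/-- Every 3-colouring of the edges of the complete graph on `N` vertices yields, for some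
`i ∈ {1,2,3}`, a cycle on `mᵢ` vertices all of whose edges have colour `i`. -/
def CycleRamseyProp (m₁ m₂ m₃ N : ℕ) : Prop :=
  ∀ χ : Sym2 (Fin N) → Fin 3,
    HasCycleLen (colourGraph χ 0) m₁ ∨ HasCycleLen (colourGraph χ 1) m₂ ∨
      HasCycleLen (colourGraph χ 2) m₃

/-- The degree of `v` in `G`. -/
noncomputable def ndeg {V : Type*} (G : SimpleGraph V) (v : V) : ℕ :=
  {u : V | G.Adj v u}.ncard

/-- The number of neighbours of `v` inside the set `S`. -/
noncomputable def degIn {V : Type*} (G : SimpleGraph V) (S : Finset V) (v : V) : ℕ :=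
  {u : V | u ∈ S ∧ G.Adj v u}.ncard

/-- The number of ordered pairs `(a, b) ∈ A × B` with `a` adjacent to `b` in `G`. -/
noncomputable def pairCount {V : Type*} (G : SimpleGraph V) (A B : Finset V) : ℕ :=
  {p : V × V | p.1 ∈ A ∧ p.2 ∈ B ∧ G.Adj p.1 p.2}.ncard

/-- The density `d(A,B)` of the pair `(A, B)` in `G`. -/
noncomputable def density {V : Type*} (G : SimpleGraph V) (A B : Finset V) : ℝ :=
  (pairCount G A B : ℝ) / ((A.card : ℝ) * (B.card : ℝ))

/-- The pair `(A, B)` is `(ε, G)`-regular. -/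
def IsRegularPair {V : Type*} (G : SimpleGraph V) (ε : ℝ) (A B : Finset V) : Prop :=
  ∀ A' ⊆ A, ∀ B' ⊆ B, ε * (A.card : ℝ) ≤ (A'.card : ℝ) →
    ε * (B.card : ℝ) ≤ (B'.card : ℝ) →
    |density G A' B' - density G A B| < ε

/-- The pair `(A, B)` is simultaneously `(ε, Gᵣ)`-regular for `r = 1, 2, 3`. -/
def SimRegular {V : Type*} (ε : ℝ) (G₁ G₂ G₃ : SimpleGraph V) (A B : Finset V) : Prop :=
  IsRegularPair G₁ ε A B ∧ IsRegularPair G₂ ε A B ∧ IsRegularPair G₃ ε A B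

/-- `M` is a connected-matching in `G`: a collection of edges, pairwise vertex-disjoint,
all lying in the same connected component of `G`. -/
def IsConnMatching {V : Type*} (G : SimpleGraph V) (M : Finset (V × V)) : Prop :=
  (∀ e ∈ M, G.Adj e.1 e.2) ∧
  (∀ e ∈ M, ∀ f ∈ M, e ≠ f → e.1 ≠ f.1 ∧ e.1 ≠ f.2 ∧ e.2 ≠ f.1 ∧ e.2 ≠ f.2) ∧
  (∀ e ∈ M, ∀ f ∈ M, G.Reachable e.1 f.1)

/-- `G` contains a connected-matching on at least `m` vertices. -/
def HasConnMatching {V : Type*} (G : SimpleGraph V) (m : ℝ) : Prop :=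
  ∃ M : Finset (V × V), IsConnMatching G M ∧ m ≤ 2 * (M.card : ℝ)

/-- `G` contains an odd connected-matching on at least `m` vertices: a connected-matching
whose component also contains an odd cycle. -/
def HasOddConnMatching {V : Type*} (G : SimpleGraph V) (m : ℝ) : Prop :=
  ∃ M : Finset (V × V), IsConnMatching G M ∧ m ≤ 2 * (M.card : ℝ) ∧
    ∃ (v : V) (w : G.Walk v v), w.IsCycle ∧ Odd w.length ∧ ∀ e ∈ M, G.Reachable e.1 v

/-- `(V₀, V₁, …, V_K)` (given as `P : Fin (K+1) → Finset V`, with `P 0` the exceptional class)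
is an `(ε, G₁, G₂, G₃)`-regular partition. -/
def IsRegularPartition3 {V : Type*} [Fintype V] (ε : ℝ) (G₁ G₂ G₃ : SimpleGraph V)
    {K : ℕ} (P : Fin (K + 1) → Finset V) : Prop :=
  (∀ i j, i ≠ j → Disjoint (P i) (P j)) ∧
  (∀ v : V, ∃ i, v ∈ P i) ∧
  ((P 0).card : ℝ) ≤ ε * (Fintype.card V : ℝ) ∧
  (∀ i j : Fin (K + 1), i ≠ 0 → j ≠ 0 → (P i).card = (P j).card) ∧
  (∀ i : Fin (K + 1), i ≠ 0 →
    (({j : Fin (K + 1) | j ≠ 0 ∧ j ≠ i ∧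
        ¬ SimRegular ε G₁ G₂ G₃ (P i) (P j)}.ncard : ℝ) ≤ ε * K))

/-- The colour-`Gc` subgraph of the three-multicoloured `(ε, ξ, Π)`-reduced-graph of the
three-coloured graph with colour subgraphs `G₁, G₂, G₃` and regular partition `P`:
vertices are the non-exceptional classes `P 1, …, P K`; two of them are adjacent if the pair is
simultaneously `(ε, Gᵣ)`-regular for `r = 1,2,3` and receive colour `Gc` if moreover the
`Gc`-density of the pair is at least `ξ`. -/
def reducedGraph {V : Type*} (ε ξ : ℝ) (G₁ G₂ G₃ : SimpleGraph V) {K : ℕ}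
    (P : Fin (K + 1) → Finset V) (Gc : SimpleGraph V) : SimpleGraph (Fin K) where
  Adj a b := a ≠ b ∧
    (SimRegular ε G₁ G₂ G₃ (P a.succ) (P b.succ) ∧
      SimRegular ε G₁ G₂ G₃ (P b.succ) (P a.succ)) ∧
    (ξ ≤ density Gc (P a.succ) (P b.succ) ∧ ξ ≤ density Gc (P b.succ) (P a.succ))
  symm := ⟨by
    intro a b h
    exact ⟨h.1.symm, ⟨h.2.1.2, h.2.1.1⟩, ⟨h.2.2.2, h.2.2.1⟩⟩⟩
  loopless := ⟨fun a h => h.1 rfl⟩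

/-- The two-multicoloured graph induced on `X`, with colour subgraphs `Gγ₁` (colour `γ₁`)
and `Gγ₂` (colour `γ₂`), contains a two-multicoloured spanning subgraph belonging to the class
`H(x₁, x₂, c₁, c₂, γ₁, γ₂)`. -/
def ContainsClassH {V : Type*} [DecidableEq V] (Gγ₁ Gγ₂ : SimpleGraph V) (X : Finset V)
    (x₁ x₂ c₁ c₂ : ℝ) : Prop :=
  ∃ (H₁ H₂ : SimpleGraph V) (X₁ X₂ : Finset V),
    H₁ ≤ Gγ₁ ∧ H₂ ≤ Gγ₂ ∧
    (∀ u v : V, (H₁ ⊔ H₂).Adj u v → u ∈ X ∧ v ∈ X) ∧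
    Disjoint X₁ X₂ ∧ X₁ ∪ X₂ = X ∧
    x₁ ≤ (X₁.card : ℝ) ∧ x₂ ≤ (X₂.card : ℝ) ∧
    (∀ v ∈ X, ((X.card : ℝ) - 1) - c₁ ≤ (degIn (H₁ ⊔ H₂) X v : ℝ)) ∧
    (∀ v ∈ X₁, (1 - c₂) * ((X₁.card : ℝ) - 1) ≤ (degIn H₁ X₁ v : ℝ)) ∧
    (∀ v ∈ X₁, (degIn H₂ X₁ v : ℝ) ≤ c₂ * ((X₁.card : ℝ) - 1)) ∧
    (∀ v ∈ X₁, (1 - c₂) * (X₂.card : ℝ) ≤ (degIn H₂ X₂ v : ℝ)) ∧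
    (∀ v ∈ X₂, (1 - c₂) * (X₁.card : ℝ) ≤ (degIn H₂ X₁ v : ℝ)) ∧
    (∀ v ∈ X₁, (degIn H₁ X₂ v : ℝ) ≤ c₂ * (X₂.card : ℝ)) ∧
    (∀ v ∈ X₂, (degIn H₁ X₁ v : ℝ) ≤ c₂ * (X₁.card : ℝ))

/-- Membership of the structure `H((a − 2η^{1/32})k, (b/2 − 2η^{1/32})k, 3η⁴k, η^{1/32}, γ₁, γ₂)`
on a vertex set `X`, where `Ga`, `Gb` are the colour-`γ₁` and colour-`γ₂` subgraphs. -/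
def MemH1 {V : Type*} [DecidableEq V] (Ga Gb : SimpleGraph V) (a b η : ℝ) (k : ℕ)
    (X : Finset V) : Prop :=
  ContainsClassH Ga Gb X ((a - 2 * η ^ ((1 : ℝ) / 32)) * k)
    ((b / 2 - 2 * η ^ ((1 : ℝ) / 32)) * k) (3 * η ^ 4 * k) (η ^ ((1 : ℝ) / 32))

/-- The edge `uv` is coloured exclusively with the colour of `Ga` (and not the colours of
`Gb`, `Gc`). -/
def ExclColour {V : Type*} (Ga Gb Gc : SimpleGraph V) (u v : V) : Prop :=
  Ga.Adj u v ∧ ¬ Gb.Adj u v ∧ ¬ Gc.Adj u v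

/-- The three-multicoloured graph with colour subgraphs `G₁, G₂, G₃` (red, blue, green)
contains a subgraph from the class `K(x₁, x₂, x₃, c)`. -/
def ContainsClassK {V : Type*} [DecidableEq V] (G₁ G₂ G₃ : SimpleGraph V)
    (x₁ x₂ x₃ c : ℝ) : Prop :=
  ∃ (H : SimpleGraph V) (X₁ X₂ X₃ : Finset V),
    H ≤ G₁ ⊔ G₂ ⊔ G₃ ∧
    Disjoint X₁ X₂ ∧ Disjoint X₁ X₃ ∧ Disjoint X₂ X₃ ∧
    x₁ ≤ (X₁.card : ℝ) ∧ x₂ ≤ (X₂.card : ℝ) ∧ x₃ ≤ (X₃.card : ℝ) ∧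
    (∀ u v : V, H.Adj u v → u ∈ X₁ ∪ X₂ ∪ X₃ ∧ v ∈ X₁ ∪ X₂ ∪ X₃) ∧
    (∀ v ∈ X₁ ∪ X₂ ∪ X₃,
      (((X₁ ∪ X₂ ∪ X₃).card : ℝ) - 1) - c ≤ (degIn H (X₁ ∪ X₂ ∪ X₃) v : ℝ)) ∧
    (∀ u ∈ X₁, ∀ v ∈ X₃, H.Adj u v → ExclColour G₁ G₂ G₃ u v) ∧
    (∀ u ∈ X₂, ∀ v ∈ X₃, H.Adj u v → ExclColour G₂ G₁ G₃ u v) ∧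
    (∀ u ∈ X₃, ∀ v ∈ X₃, H.Adj u v → ExclColour G₃ G₁ G₂ u v)

/-- The three-multicoloured graph with colour subgraphs `G₁, G₂, G₃` (red, blue, green)
contains a subgraph from the class `K*(x₁, x₂, y₁, y₂, z, c)`. -/
def ContainsClassKstar {V : Type*} [DecidableEq V] (G₁ G₂ G₃ : SimpleGraph V)
    (x₁ x₂ y₁ y₂ z c : ℝ) : Prop :=
  ∃ (H : SimpleGraph V) (X₁ X₂ Y₁ Y₂ : Finset V),
    H ≤ G₁ ⊔ G₂ ⊔ G₃ ∧
    Disjoint X₁ X₂ ∧ Disjoint X₁ Y₁ ∧ Disjoint X₁ Y₂ ∧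
    Disjoint X₂ Y₁ ∧ Disjoint X₂ Y₂ ∧ Disjoint Y₁ Y₂ ∧
    x₁ ≤ (X₁.card : ℝ) ∧ x₂ ≤ (X₂.card : ℝ) ∧ y₁ ≤ (Y₁.card : ℝ) ∧ y₂ ≤ (Y₂.card : ℝ) ∧
    z ≤ (Y₁.card : ℝ) + (Y₂.card : ℝ) ∧
    (∀ u v : V, H.Adj u v → u ∈ X₁ ∪ X₂ ∪ Y₁ ∪ Y₂ ∧ v ∈ X₁ ∪ X₂ ∪ Y₁ ∪ Y₂) ∧
    (∀ v ∈ X₁ ∪ X₂ ∪ Y₁ ∪ Y₂,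
      (((X₁ ∪ X₂ ∪ Y₁ ∪ Y₂).card : ℝ) - 1) - c ≤ (degIn H (X₁ ∪ X₂ ∪ Y₁ ∪ Y₂) v : ℝ)) ∧
    (∀ u ∈ X₁, ∀ v ∈ Y₁, H.Adj u v → ExclColour G₁ G₂ G₃ u v) ∧
    (∀ u ∈ X₂, ∀ v ∈ Y₂, H.Adj u v → ExclColour G₁ G₂ G₃ u v) ∧
    (∀ u ∈ X₁, ∀ v ∈ Y₂, H.Adj u v → ExclColour G₂ G₁ G₃ u v) ∧
    (∀ u ∈ X₂, ∀ v ∈ Y₁, H.Adj u v → ExclColour G₂ G₁ G₃ u v) ∧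
    (∀ u ∈ X₁, ∀ v ∈ X₂, H.Adj u v → ExclColour G₃ G₁ G₂ u v) ∧
    (∀ u ∈ Y₁, ∀ v ∈ Y₂, H.Adj u v → ExclColour G₃ G₁ G₂ u v)

/-! Each vertex misses at most `c` others, so any two non-adjacent vertices `u, v` satisfy the
Ore-type bound `d̄(u) + d̄(v) + 2 ≤ m` on their numbers of non-neighbours. Arrange `m` distinct
vertices cyclically as `σ 0, …, σ (m - 1)` and count the gaps, i.e. consecutive pairs that are not
adjacent. If `σ (m - 1) σ 0` is a gap, the bound leaves, by pigeonhole over the `m` positions, an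
index `a` with `σ (m - 1) ∼ σ (a - 1)` and `σ 0 ∼ σ a`; reversing the segment `σ 0, …, σ (a - 1)`
closes that gap without opening a new one. An arrangement with the fewest gaps therefore has none,
and is an `m`-cycle. -/

open Finset Function

namespace Fin

variable {n : ℕ}

def reflectBelow (a k : Fin (n + 1)) : Fin (n + 1) := if k < a then a - 1 - k else k

lemma reflectBelow_of_lt {a k : Fin (n + 1)} (h : k < a) : reflectBelow a k = a - 1 - k :=
  if_pos h

lemma reflectBelow_of_le {a k : Fin (n + 1)} (h : a ≤ k) : reflectBelow a k = k :=
  if_neg h.not_gt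

lemma val_reflectBelow_of_lt {a k : Fin (n + 1)} (h : k < a) :
    (reflectBelow a k).val = a.val - 1 - k.val := by
  have ha : a ≠ 0 := ne_zero_of_lt h
  have hk : k ≤ a - 1 := by
    rw [le_def, val_sub_one_of_ne_zero ha]; omega
  rw [reflectBelow_of_lt h, sub_val_of_le hk, val_sub_one_of_ne_zero ha]

lemma reflectBelow_lt_iff {a k : Fin (n + 1)} : reflectBelow a k < a ↔ k < a := by
  refine ⟨fun h => ?_, fun h => ?_⟩
  · by_contra hk
    rw [reflectBelow_of_le (not_lt.mp hk)] at h
    exact hk h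
  · rw [lt_def, val_reflectBelow_of_lt h]
    omega

lemma reflectBelow_involutive (a : Fin (n + 1)) : Involutive (reflectBelow a) := by
  intro k
  by_cases hk : k < a
  · rw [reflectBelow_of_lt (reflectBelow_lt_iff.mpr hk), reflectBelow_of_lt hk]
    abel
  · rw [reflectBelow_of_le (not_lt.mp hk), reflectBelow_of_le (not_lt.mp hk)]

end Fin

namespace SimpleGraph

variable {V : Type*} {n : ℕ} (G : SimpleGraph V) [DecidableRel G.Adj]

/-- `σ` is read cyclically: addition in `Fin (n + 1)` wraps around, so position `Fin.last n`
is the pair `σ (Fin.last n), σ 0`. -/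
def cyclicGaps (σ : Fin (n + 1) → V) : Finset (Fin (n + 1)) :=
  {k | ¬ G.Adj (σ k) (σ (k + 1))}

variable {G}

lemma mem_cyclicGaps {σ : Fin (n + 1) → V} {k : Fin (n + 1)} :
    k ∈ cyclicGaps G σ ↔ ¬ G.Adj (σ k) (σ (k + 1)) := by
  simp [cyclicGaps]

lemma card_cyclicGaps_comp_add (σ : Fin (n + 1) → V) (r : Fin (n + 1)) :
    #(cyclicGaps G (fun k => σ (k + r))) = #(cyclicGaps G σ) :=
  card_equiv (Equiv.addRight r) fun k => by simp [mem_cyclicGaps, add_right_comm]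

/-- After reversing `σ` on `[0, a)`, a gap at `k < a - 1` is the gap of `σ` at `a - 2 - k`, a gap
at `k ≥ a` is a gap of `σ`, and positions `a - 1` and `Fin.last n` now carry the edges `σ 0 σ a`
and `σ (Fin.last n) σ (a - 1)`. -/
lemma reflectBelow_mem_erase_cyclicGaps {σ : Fin (n + 1) → V} {a k : Fin (n + 1)}
    (h₁ : G.Adj (σ (Fin.last n)) (σ (a - 1))) (h₂ : G.Adj (σ 0) (σ a))
    (hk : k ∈ cyclicGaps G (σ ∘ Fin.reflectBelow a)) :
    Fin.reflectBelow (a - 1) k ∈ (cyclicGaps G σ).erase (Fin.last n) := by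
  have ha : a ≠ 0 := by rintro rfl; exact G.loopless.irrefl _ h₂
  have ha' : (a - 1).val = a.val - 1 := Fin.val_sub_one_of_ne_zero ha
  rw [mem_cyclicGaps, comp_apply, comp_apply] at hk
  rw [mem_erase, mem_cyclicGaps]
  rcases lt_trichotomy (k.val + 1) a.val with hlt | heq | hgt
  · have hk1 : (k + 1).val = k.val + 1 := by
      rw [Fin.val_add_one, if_neg]; rintro rfl; rw [Fin.val_last] at hlt; omega
    have hka : k < a - 1 := by rw [Fin.lt_def]; omega
    rw [Fin.reflectBelow_of_lt (hka.trans_le (by rw [Fin.le_def]; omega)),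
      Fin.reflectBelow_of_lt (by rw [Fin.lt_def]; omega)] at hk
    refine ⟨?_, fun h => hk ?_⟩
    · rw [Ne, Fin.ext_iff, Fin.val_reflectBelow_of_lt hka, Fin.val_last]; omega
    · rw [Fin.reflectBelow_of_lt hka] at h
      convert h.symm using 2 <;> abel
  · have hka : k = a - 1 := by rw [Fin.ext_iff]; omega
    subst hka
    rw [sub_add_cancel, Fin.reflectBelow_of_lt (by rw [Fin.lt_def]; omega), sub_self,
      Fin.reflectBelow_of_le le_rfl] at hk
    exact absurd h₂ hk
  · have hak : a ≤ k := by rw [Fin.le_def]; omega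
    rw [Fin.reflectBelow_of_le (by rw [Fin.le_def]; omega)]
    rw [Fin.reflectBelow_of_le hak] at hk
    by_cases hlast : k = Fin.last n
    · subst hlast
      rw [Fin.last_add_one, Fin.reflectBelow_of_lt (Fin.pos_iff_ne_zero.mpr ha), sub_zero] at hk
      exact absurd h₁ hk
    · have hk1 : (k + 1).val = k.val + 1 := by rw [Fin.val_add_one, if_neg hlast]
      rw [Fin.reflectBelow_of_le (by rw [Fin.le_def]; omega)] at hk
      exact ⟨hlast, hk⟩

lemma card_cyclicGaps_comp_reflectBelow_lt {σ : Fin (n + 1) → V} {a : Fin (n + 1)}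
    (h₁ : G.Adj (σ (Fin.last n)) (σ (a - 1))) (h₂ : G.Adj (σ 0) (σ a))
    (hgap : Fin.last n ∈ cyclicGaps G σ) :
    #(cyclicGaps G (σ ∘ Fin.reflectBelow a)) < #(cyclicGaps G σ) :=
  calc #(cyclicGaps G (σ ∘ Fin.reflectBelow a))
      ≤ #((cyclicGaps G σ).erase (Fin.last n)) :=
        card_le_card_of_injOn _ (fun _ hk => reflectBelow_mem_erase_cyclicGaps h₁ h₂ hk)
          (Fin.reflectBelow_involutive _).injective.injOn
    _ < #(cyclicGaps G σ) := card_erase_lt_of_mem hgap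

lemma hasCycleLen_of_cyclicGaps_eq_empty (hn : 2 ≤ n) {σ : Fin (n + 1) → V} (hσ : Injective σ)
    (h : cyclicGaps G σ = ∅) : HasCycleLen G (n + 1) := by
  obtain ⟨n, rfl⟩ : ∃ k, n = k + 1 := ⟨n - 1, by omega⟩
  have hadj (k : Fin (n + 2)) : G.Adj (σ k) (σ (k + 1)) := by
    simpa [mem_cyclicGaps] using eq_empty_iff_forall_notMem.mp h k
  refine (cycleGraph_isContained_iff (by omega)).mp ⟨⟨⟨σ, fun {u v} huv => ?_⟩, hσ⟩⟩
  rcases cycleGraph_adj.mp huv with h | h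
  · rw [sub_eq_iff_eq_add'] at h
    exact h ▸ (hadj v).symm
  · rw [sub_eq_iff_eq_add'] at h
    exact h ▸ hadj u

variable [Fintype V]

lemma ndeg_eq_degree (v : V) : ndeg G v = G.degree v := by
  rw [ndeg, ← card_neighborFinset_eq_degree, ← Set.ncard_coe_finset]
  congr 1
  ext; simp

variable [DecidableEq V]

lemma degree_compl_add_degree_add_one (v : V) :
    Gᶜ.degree v + G.degree v + 1 = Fintype.card V := by
  have := G.degree_lt_card_verts v
  rw [degree_compl]
  omega

lemma card_filter_not_adj_le {ι : Type*} [Fintype ι] (v : V) {f : ι → V}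
    (hf : Injective f) : #{i | ¬ G.Adj v (f i)} ≤ Gᶜ.degree v + 1 :=
  calc #{i | ¬ G.Adj v (f i)}
      ≤ #(insert v (Gᶜ.neighborFinset v)) := by
        refine card_le_card_of_injOn f (fun i hi => ?_) hf.injOn
        by_cases hv : f i = v
        · simp [hv]
        · simp_all [compl_adj, eq_comm]
    _ ≤ Gᶜ.degree v + 1 := card_insert_le _ _

lemma exists_adj_adj_of_degree_compl_add_le {σ : Fin (n + 1) → V} (hσ : Injective σ)
    (h : Gᶜ.degree (σ (Fin.last n)) + Gᶜ.degree (σ 0) + 2 ≤ n + 1) :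
    ∃ a, G.Adj (σ (Fin.last n)) (σ (a - 1)) ∧ G.Adj (σ 0) (σ a) := by
  by_contra! hcon
  set A : Finset (Fin (n + 1)) := {a | ¬ G.Adj (σ (Fin.last n)) (σ (a - 1))}
  set B : Finset (Fin (n + 1)) := {a | ¬ G.Adj (σ 0) (σ a)}
  have hA : #A ≤ Gᶜ.degree (σ (Fin.last n)) + 1 :=
    card_filter_not_adj_le _ (hσ.comp (sub_left_injective (b := 1)))
  have hB : #B ≤ Gᶜ.degree (σ 0) + 1 := card_filter_not_adj_le _ hσ
  have hcover : A ∪ B = univ := eq_univ_of_forall fun a => by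
    by_cases ha : G.Adj (σ (Fin.last n)) (σ (a - 1))
    · exact mem_union_right _ (by simpa [B] using hcon a ha)
    · exact mem_union_left _ (by simpa [A] using ha)
  have hinter : 0 < #(A ∩ B) := card_pos.mpr ⟨0, by
    simp [A, B, show (-1 : Fin (n + 1)) = Fin.last n from Fin.ext Fin.coe_neg_one]⟩
  have := card_union_add_card_inter A B
  rw [hcover, card_univ, Fintype.card_fin] at this
  omega

lemma exists_injective_card_cyclicGaps_lt (hn : n ≠ 0)
    (hore : ∀ u v, Gᶜ.Adj u v → Gᶜ.degree u + Gᶜ.degree v + 2 ≤ n + 1)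
    {σ : Fin (n + 1) → V} (hσ : Injective σ) (hgap : (cyclicGaps G σ).Nonempty) :
    ∃ σ' : Fin (n + 1) → V, Injective σ' ∧ #(cyclicGaps G σ') < #(cyclicGaps G σ) := by
  obtain ⟨i, hi⟩ := hgap
  set τ : Fin (n + 1) → V := fun k => σ (k + (i + 1))
  have hτ : Injective τ := hσ.comp (add_left_injective _)
  have hlast : Fin.last n ∈ cyclicGaps G τ := by
    rw [mem_cyclicGaps, Fin.last_add_one]
    show ¬G.Adj (σ (Fin.last n + (i + 1))) (σ (0 + (i + 1)))
    rwa [zero_add, add_left_comm, Fin.last_add_one, add_zero, ← mem_cyclicGaps]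
  have hcompl : Gᶜ.Adj (τ (Fin.last n)) (τ 0) := by
    rw [compl_adj]
    refine ⟨hτ.ne (by simpa using hn), ?_⟩
    simpa [mem_cyclicGaps] using hlast
  obtain ⟨a, h₁, h₂⟩ := exists_adj_adj_of_degree_compl_add_le hτ (hore _ _ hcompl)
  exact ⟨τ ∘ Fin.reflectBelow a, hτ.comp (Fin.reflectBelow_involutive a).injective,
    (card_cyclicGaps_comp_reflectBelow_lt h₁ h₂ hlast).trans_eq (card_cyclicGaps_comp_add σ _)⟩

lemma exists_injective_cyclicGaps_eq_empty (hn : n ≠ 0)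
    (hore : ∀ u v, Gᶜ.Adj u v → Gᶜ.degree u + Gᶜ.degree v + 2 ≤ n + 1)
    {σ : Fin (n + 1) → V} (hσ : Injective σ) :
    ∃ σ' : Fin (n + 1) → V, Injective σ' ∧ cyclicGaps G σ' = ∅ := by
  induction hk : #(cyclicGaps G σ) using Nat.strong_induction_on generalizing σ with
  | _ k ih =>
    obtain hgap | hgap := (cyclicGaps G σ).eq_empty_or_nonempty
    · exact ⟨σ, hσ, hgap⟩
    · obtain ⟨σ', hσ', hlt⟩ := exists_injective_card_cyclicGaps_lt hn hore hσ hgap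
      exact ih _ (hk ▸ hlt) hσ' rfl

theorem hasCycleLen_of_degree_compl_add_le {m : ℕ} (hm : 3 ≤ m) (hmV : m ≤ Fintype.card V)
    (hore : ∀ u v, Gᶜ.Adj u v → Gᶜ.degree u + Gᶜ.degree v + 2 ≤ m) : HasCycleLen G m := by
  obtain ⟨n, rfl⟩ : ∃ n, m = n + 1 := ⟨m - 1, by omega⟩
  obtain ⟨σ⟩ := Function.Embedding.nonempty_of_card_le (α := Fin (n + 1)) (β := V) (by simpa)
  obtain ⟨σ', hσ', hgaps⟩ := exists_injective_cyclicGaps_eq_empty (by omega) hore σ.injective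
  exact hasCycleLen_of_cyclicGaps_eq_empty (by omega) hσ' hgaps

end SimpleGraph

theorem almost_complete_pancyclic_general {V : Type*} [Fintype V] (G : SimpleGraph V) (c : ℝ) (n : ℕ)
    (hn : Fintype.card V = n)
    (hdeg : ∀ v : V, ((n : ℝ) - 1) - c ≤ (ndeg G v : ℝ))
    (m : ℕ) (hm3 : 3 ≤ m) (hmc : 2 * c + 2 ≤ (m : ℝ)) (hmn : m ≤ n) :
    HasCycleLen G m := by
  classical
  have hcompl (v : V) : (Gᶜ.degree v : ℝ) ≤ c := by
    have hv := hdeg v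
    have hsum : (Gᶜ.degree v : ℝ) + G.degree v + 1 = n := by
      rw [← hn]
      exact_mod_cast degree_compl_add_degree_add_one v
    rw [ndeg_eq_degree] at hv
    linarith
  refine hasCycleLen_of_degree_compl_add_le hm3 (hn ▸ hmn) fun u v _ => ?_
  have hu := hcompl u
  have hv := hcompl v
  exact_mod_cast (by linarith : (Gᶜ.degree u : ℝ) + Gᶜ.degree v + 2 ≤ m)

/-- A `c`-almost-complete graph on `n` vertices contains cycles of every length `m` with
`max {3, 2c + 2} ≤ m ≤ n`. -/
theorem almost_complete_pancyclic {V : Type*} [Fintype V] (G : SimpleGraph V) (c : ℝ) (n : ℕ)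
    (hc : 0 ≤ c) (hn : Fintype.card V = n)
    (hdeg : ∀ v : V, ((n : ℝ) - 1) - c ≤ (ndeg G v : ℝ))
    (m : ℕ) (hm3 : 3 ≤ m) (hmc : 2 * c + 2 ≤ (m : ℝ)) (hmn : m ≤ n) :
    HasCycleLen G m :=
  almost_complete_pancyclic_general G c n hn hdeg m hm3 hmc hmn
end

section
/- Let c ≥ 0 be a real number and let G = G[X,Y] be a c-almost-complete bipartite graph with parts X and Y. Then for every even integer m with max{4, 4c + 2} ≤ m ≤ 2·min{|X|, |Y|}, G contains a cycle on exactly m vertices. -/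
open SimpleGraph

/-!
Choose `A ⊆ X` and `B ⊆ Y` with `|A| = |B| = k = m/2`. Since `4c + 2 ≤ 2k`, every vertex of
`A ∪ B` has more than `k/2` neighbours on the other side, and a bipartite Dirac argument
yields a Hamiltonian cycle of `G[A, B]`. Take a longest path `v₀ … vₙ₋₁` of `G[A, B]`; all
neighbours of its endpoints lie on it. Pigeonholing the neighbours of `v₀` against those of
`vₙ₋₁` (or of a vertex `y` off the path) over the consecutive pairs `vᵢ vᵢ₊₁` gives a Pósa
rotation: it rules out endpoints on the same side, and otherwise closes the path into a cycle
on its vertex set. Such a cycle has no neighbour off the path, and any two vertices on one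
side have a common neighbour, so the path covers `A ∪ B`.
-/

namespace List

variable {α : Type*} {R : α → α → Prop}

theorem IsChain.exists_rel_of_mem [Std.Symm R] {l : List α} (h : IsChain R l)
    (hl : 2 ≤ l.length) {u : α} (hu : u ∈ l) : ∃ v, R u v := by
  obtain ⟨i, hi, rfl⟩ := getElem_of_mem hu
  rw [isChain_iff_getElem] at h
  by_cases hi' : i + 1 < l.length
  · exact ⟨_, h i hi'⟩
  · refine ⟨l[i - 1], Std.Symm.symm _ _ ?_⟩
    convert h (i - 1) (by omega) using 2
    omega

theorem IsChain.cons_reverse_append [Std.Symm R] {s t : List α} {a b x : α}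
    (h : IsChain R (s ++ a :: b :: t)) (hx : x ∈ (s ++ a :: b :: t).head?) (hxb : R x b) :
    IsChain R (a :: (s.reverse ++ b :: t)) := by
  have h' : IsChain R ((s ++ [a]) ++ b :: t) := by simpa using h
  rw [isChain_append] at h'
  have hlast : (s ++ [a]).reverse.getLast? = some x := by
    rw [getLast?_reverse]; cases s <;> simp_all
  have := isChain_append.mpr ⟨isChain_reverse.mpr (h'.1.imp fun _ _ h => Std.Symm.symm _ _ h),
    h'.2.1, fun y hy z hz => by simp_all⟩
  simpa using this

theorem IsChain.countP_dropLast_le_countP_tail {S T : α → Bool} {l : List α}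
    (hl : IsChain R l) (hST : ∀ a b, R a b → S a → T b) :
    l.dropLast.countP S ≤ l.tail.countP T := by
  induction l with
  | nil => simp
  | cons a l ih =>
    cases l with
    | nil => simp
    | cons b t =>
      have hab := hST a b hl.rel
      have := ih hl.of_cons
      simp only [dropLast_cons_cons, tail_cons, countP_cons] at this ⊢
      split_ifs at this ⊢ <;> simp_all; omega

/-- Pigeonhole over the consecutive pairs `(a, b)` of `l`: the first entries are counted by
`l.dropLast` and the second ones by `l.tail`. -/
theorem IsChain.exists_eq_append_cons_cons {P Q S : α → Bool} {l : List α}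
    (hl : IsChain R l) (hP : ∀ a b, R a b → P a → S a) (hQ : ∀ a b, R a b → Q b → S a)
    (h : l.dropLast.countP S < l.dropLast.countP P + l.tail.countP Q) :
    ∃ s a b t, l = s ++ a :: b :: t ∧ P a ∧ Q b := by
  induction l with
  | nil => simp at h
  | cons a l ih =>
    cases l with
    | nil => simp at h
    | cons b t =>
      by_cases hab : P a ∧ Q b
      · exact ⟨[], a, b, t, rfl, hab⟩
      have hPa := hP a b hl.rel
      have hQb := hQ a b hl.rel
      obtain ⟨s, a', b', t', hbt, h'⟩ := ih hl.of_cons (by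
        simp only [dropLast_cons_cons, tail_cons, countP_cons] at h ⊢
        split_ifs at h ⊢ <;> simp_all <;> omega)
      exact ⟨a :: s, a', b', t', by rw [hbt]; rfl, h'⟩

theorem countP_eq_countP_tail_add {l : List α} {x : α} (hx : x ∈ l.head?) (p : α → Bool) :
    l.countP p = l.tail.countP p + if p x then 1 else 0 := by
  obtain ⟨t, rfl⟩ := head?_eq_some_iff.mp hx
  simp [countP_cons]

theorem countP_eq_countP_dropLast_add {l : List α} {z : α} (hz : z ∈ l.getLast?)
    (p : α → Bool) : l.countP p = l.dropLast.countP p + if p z then 1 else 0 := by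
  obtain ⟨s, rfl⟩ := getLast?_eq_some_iff.mp hz
  simp

section DecidableEq

variable [DecidableEq α] {l : List α}

theorem Nodup.countP_mem_le_card (hl : l.Nodup) (A : Finset α) : l.countP (· ∈ A) ≤ A.card := by
  rw [← hl.card_eq_countP]
  exact Finset.card_le_card fun _ hu => (Finset.mem_filter.mp hu).2

theorem Nodup.card_filter_add_countP_mem_le (hl : l.Nodup) (A : Finset α) (p : α → Prop)
    [DecidablePred p] : (A.filter p).card + l.countP (· ∈ A) ≤ l.countP p + A.card := by
  rw [← hl.card_eq_countP, ← hl.card_eq_countP, Finset.filter_mem_eq_inter, Finset.inter_comm,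
    ← Finset.card_sdiff_add_card_inter A l.toFinset]
  have hsub : A.filter p ⊆ l.toFinset.filter p ∪ (A \ l.toFinset) := fun u hu => by
    by_cases hul : u ∈ l.toFinset <;> simp_all
  have := (Finset.card_le_card hsub).trans (Finset.card_union_le _ _)
  omega

end DecidableEq

end List

theorem Cycle.Chain.exists_perm_cons_isChain {α : Type*} {R : α → α → Prop} {l : List α}
    {u w : α} (hl : Cycle.Chain R (l : Cycle α)) (hu : u ∈ l) (hwu : R w u) :
    ∃ l' : List α, l'.Perm (w :: l) ∧ l'.IsChain R := by
  obtain ⟨s, t, rfl⟩ := List.append_of_mem hu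
  have hrot : ((s ++ u :: t : List α) : Cycle α) = (u :: (t ++ s) : List α) :=
    Cycle.coe_eq_coe.mpr (by simpa using List.isRotated_append (l := s) (l' := u :: t))
  rw [hrot, Cycle.chain_coe_cons, ← List.cons_append, List.isChain_append] at hl
  refine ⟨w :: u :: (t ++ s), ?_, hl.1.cons (by simpa using hwu)⟩
  exact .cons _ (by simpa using List.perm_append_comm (l₁ := s) (l₂ := u :: t) |>.symm)

namespace SimpleGraph

open Finset

variable {V : Type*} {G H : SimpleGraph V}

theorem HasCycleLen.mono (hGH : G ≤ H) {m : ℕ} (hG : HasCycleLen G m) : HasCycleLen H m := by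
  obtain ⟨v, w, hw, rfl⟩ := hG
  exact ⟨v, w.mapLe hGH, hw.mapLe hGH, by simp⟩

theorem hasCycleLen_of_cycleChain {C : List V} (hC : Cycle.Chain G.Adj (C : Cycle V))
    (hnd : C.Nodup) (hlen : 3 ≤ C.length) : HasCycleLen G C.length := by
  obtain ⟨x, y, t, rfl⟩ : ∃ x y t, C = x :: y :: t := by
    match C, hlen with | x :: y :: t, _ => exact ⟨x, y, t, rfl⟩
  rw [Cycle.chain_coe_cons, List.cons_append, List.isChain_cons_cons] at hC
  obtain ⟨p, hps, hpl⟩ :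
      ∃ p : G.Walk y x, p.support = y :: (t ++ [x]) ∧ p.length = t.length + 1 := by
    let q := Walk.ofSupport _ (List.cons_ne_nil _ _) hC.2
    refine ⟨q.copy (List.head_cons ..) (by simp), ?_, ?_⟩
    · rw [Walk.support_copy, Walk.support_ofSupport]
    · rw [Walk.length_copy, Walk.length_ofSupport]; simp
  have hp : p.IsPath := .mk' <| hps ▸ (List.perm_append_singleton x (y :: t)).nodup_iff.mpr hnd
  refine ⟨x, .cons hC.1 p, ?_, by simp [hpl]⟩
  rw [Walk.isCycle_iff_isPath_tail_and_le_length]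
  exact ⟨by simpa using hp, by simp only [Walk.length_cons, hpl]; simpa using hlen⟩

theorem exists_adj_adj_of_card_lt [DecidableEq V] [DecidableRel G.Adj] {B : Finset V} {x w : V}
    (h : #B < #{b ∈ B | G.Adj x b} + #{b ∈ B | G.Adj w b}) : ∃ b, G.Adj x b ∧ G.Adj w b := by
  obtain ⟨b, hb⟩ :=
    inter_nonempty_of_card_lt_card_add_card (filter_subset _ _) (filter_subset _ _) h
  simp only [mem_inter, mem_filter] at hb
  exact ⟨b, hb.1.2, hb.2.2⟩

structure IsLongestPath (G : SimpleGraph V) (l : List V) : Prop where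
  nodup : l.Nodup
  isChain : l.IsChain G.Adj
  length_le : ∀ ⦃l' : List V⦄, l'.Nodup → l'.IsChain G.Adj → l'.length ≤ l.length

theorem exists_isLongestPath {N : ℕ}
    (hN : ∀ l : List V, l.Nodup → l.IsChain G.Adj → l.length ≤ N) : ∃ l, G.IsLongestPath l := by
  obtain ⟨l, ⟨hnd, hc⟩, hmin⟩ := (measure fun l : List V => N - l.length).wf.has_min
    {l | l.Nodup ∧ l.IsChain G.Adj} ⟨[], List.nodup_nil, List.isChain_nil⟩
  refine ⟨l, hnd, hc, fun l' hnd' hc' => not_lt.mp fun hlt => hmin l' ⟨hnd', hc'⟩ ?_⟩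
  have := hN l' hnd' hc'
  show N - l'.length < N - l.length
  omega

namespace IsLongestPath

variable {l : List V}

theorem reverse (hl : G.IsLongestPath l) : G.IsLongestPath l.reverse where
  nodup := List.nodup_reverse.mpr hl.nodup
  isChain := List.isChain_reverse.mpr (hl.isChain.imp fun _ _ h => h.symm)
  length_le _ hnd hc := (List.length_reverse (as := l)).symm ▸ hl.length_le hnd hc

theorem not_isChain_of_perm_cons (hl : G.IsLongestPath l) {w : V} (hw : w ∉ l) {l' : List V}
    (hl' : l'.Perm (w :: l)) : ¬ l'.IsChain G.Adj := fun hc => by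
  have := hl.length_le (hl'.nodup_iff.mpr (hl.nodup.cons hw)) hc
  simp [hl'.length_eq] at this

theorem mem_of_adj_head (hl : G.IsLongestPath l) {x u : V} (hx : x ∈ l.head?)
    (hxu : G.Adj x u) : u ∈ l := by
  by_contra hu
  exact hl.not_isChain_of_perm_cons hu (.refl _)
    (hl.isChain.cons fun y hy => by simp_all [G.adj_comm])

theorem mem_of_adj_getLast (hl : G.IsLongestPath l) {z u : V} (hz : z ∈ l.getLast?)
    (hzu : G.Adj z u) : u ∈ l :=
  List.mem_reverse.mp <| hl.reverse.mem_of_adj_head (by rwa [List.head?_reverse]) hzu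

/-- Otherwise, opening the cycle at `u` and prepending `w` would give a longer path. -/
theorem mem_of_adj_of_cycleChain (hl : G.IsLongestPath l) {C : List V} (hCl : C.Perm l)
    (hC : Cycle.Chain G.Adj (C : Cycle V)) {u w : V} (hu : u ∈ l) (huw : G.Adj u w) :
    w ∈ l := by
  by_contra hw
  obtain ⟨l', hl', hc⟩ := hC.exists_perm_cons_isChain (hCl.mem_iff.mpr hu) huw.symm
  exact hl.not_isChain_of_perm_cons hw (hl'.trans (hCl.cons w)) hc

end IsLongestPath

section Bipartite

variable [DecidableEq V] {A B : Finset V} {k : ℕ} {l : List V}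

namespace IsBipartiteWith

theorem mem_union_of_mem_isChain (hH : H.IsBipartiteWith A B) (hc : l.IsChain H.Adj)
    (hlen : 2 ≤ l.length) {u : V} (hu : u ∈ l) : u ∈ A ∪ B := by
  have := H.symm
  obtain ⟨v, huv⟩ := hc.exists_rel_of_mem hlen hu
  rcases hH.mem_of_adj huv with h | h
  exacts [mem_union_left _ h.1, mem_union_right _ h.1]

theorem length_le_of_isChain (hH : H.IsBipartiteWith A B) (hnd : l.Nodup)
    (hc : l.IsChain H.Adj) : l.length ≤ #A + #B + 1 := by
  by_cases hlen : 2 ≤ l.length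
  · have := card_le_card fun u hu => hH.mem_union_of_mem_isChain hc hlen (List.mem_toFinset.mp hu)
    rw [List.toFinset_card_of_nodup hnd] at this
    have := card_union_le A B
    omega
  · omega

theorem countP_mem_right_lt (hH : H.IsBipartiteWith A B) (hc : l.IsChain H.Adj) {x z : V}
    (hx : x ∈ l.head?) (hxA : x ∈ A) (hz : z ∈ l.getLast?) (hzA : z ∈ A) :
    l.countP (· ∈ B) < l.countP (· ∈ A) := by
  have hzB : z ∉ B := Finset.disjoint_left.mp (disjoint_coe.mp hH.disjoint) hzA
  have h1 := hc.countP_dropLast_le_countP_tail (S := (· ∈ B)) (T := (· ∈ A))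
    fun a b hab ha => by simpa using hH.symm.mem_of_mem_adj (by simpa using ha) hab
  have h2 := List.countP_eq_countP_dropLast_add hz (· ∈ B)
  have h3 := List.countP_eq_countP_tail_add hx (· ∈ A)
  simp only [hzB, hxA, decide_false, decide_true, Bool.false_eq_true, if_false, if_true] at h2 h3
  omega

theorem countP_adj_eq_card [DecidableRel H.Adj] (hH : H.IsBipartiteWith A B) {a : V}
    (ha : a ∈ A) (hnd : l.Nodup) (hN : ∀ u, H.Adj a u → u ∈ l) :
    l.countP (H.Adj a ·) = #{b ∈ B | H.Adj a b} := by
  rw [← hnd.card_eq_countP]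
  congr 1
  ext u
  simp only [mem_filter, List.mem_toFinset]
  exact ⟨fun h => ⟨hH.mem_of_mem_adj ha h.2, h.2⟩, fun h => ⟨hN u h.2, h.2⟩⟩

end IsBipartiteWith

namespace IsLongestPath

theorem getLast_notMem_of_head_mem [DecidableRel H.Adj] (hH : H.IsBipartiteWith A B)
    (hl : H.IsLongestPath l) (hA : #A = k) (hB : #B = k)
    (hdA : ∀ a ∈ A, k < 2 * #{b ∈ B | H.Adj a b})
    (hdB : ∀ b ∈ B, k < 2 * #{a ∈ A | H.Adj b a})
    {x z : V} (hx : x ∈ l.head?) (hxA : x ∈ A) (hz : z ∈ l.getLast?) : z ∉ A := by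
  intro hzA
  obtain ⟨y, hyB, hyl⟩ : ∃ y ∈ B, y ∉ l := by
    by_contra! h
    have := card_le_card (show B ⊆ l.toFinset.filter (· ∈ B) from
      fun y hy => by simp [h y hy, hy])
    rw [hl.nodup.card_eq_countP] at this
    have := hH.countP_mem_right_lt hl.isChain hx hxA hz hzA
    have := hl.nodup.countP_mem_le_card A
    omega
  have hdx := hH.countP_adj_eq_card hxA hl.nodup fun _ => hl.mem_of_adj_head hx
  have hdy := hl.nodup.card_filter_add_countP_mem_le A (H.Adj y ·)
  have h1 := List.countP_eq_countP_tail_add hx (H.Adj x ·)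
  have h2 := List.countP_eq_countP_dropLast_add hz (H.Adj y ·)
  have h3 := List.countP_eq_countP_dropLast_add hz (· ∈ A)
  have hyz : ¬ H.Adj y z := fun h => hyl (hl.mem_of_adj_getLast hz h.symm)
  obtain ⟨s, a, b, t, rfl, hya, hxb⟩ := hl.isChain.exists_eq_append_cons_cons
    (P := (H.Adj y ·)) (Q := (H.Adj x ·)) (S := (· ∈ A))
    (fun a b _ hya => by simpa using hH.symm.mem_of_mem_adj hyB (by simpa using hya))
    (fun a b hab hxb => by
      simpa using hH.symm.mem_of_mem_adj (hH.mem_of_mem_adj hxA (by simpa using hxb)) hab.symm)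
    (by
      have := hdA x hxA
      have := hdB y hyB
      simp only [hyz, hzA, H.loopless.irrefl, decide_false, decide_true, Bool.false_eq_true,
        if_false, if_true] at h1 h2 h3
      omega)
  have := H.symm
  refine hl.not_isChain_of_perm_cons hyl ?_
    ((hl.isChain.cons_reverse_append hx (by simpa using hxb)).cons (by simpa using hya))
  exact .cons _ (((List.reverse_perm s).append_right _).cons _ |>.trans List.perm_middle.symm)

theorem exists_perm_cycleChain [DecidableRel H.Adj] (hH : H.IsBipartiteWith A B)
    (hl : H.IsLongestPath l) (hA : #A = k)
    (hdA : ∀ a ∈ A, k < 2 * #{b ∈ B | H.Adj a b})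
    (hdB : ∀ b ∈ B, k < 2 * #{a ∈ A | H.Adj b a})
    {x z : V} (hx : x ∈ l.head?) (hxA : x ∈ A) (hz : z ∈ l.getLast?) (hzB : z ∈ B) :
    ∃ C : List V, C.Perm l ∧ Cycle.Chain H.Adj (C : Cycle V) := by
  have hdx := hH.countP_adj_eq_card hxA hl.nodup fun _ => hl.mem_of_adj_head hx
  have hdz := hH.symm.countP_adj_eq_card hzB hl.nodup fun _ => hl.mem_of_adj_getLast hz
  have h1 := List.countP_eq_countP_tail_add hx (H.Adj x ·)
  have h2 := List.countP_eq_countP_dropLast_add hz (H.Adj z ·)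
  have h3 := List.countP_eq_countP_dropLast_add hz (· ∈ A)
  have h4 := hl.nodup.countP_mem_le_card A
  obtain ⟨s, a, b, t, rfl, hza, hxb⟩ := hl.isChain.exists_eq_append_cons_cons
    (P := (H.Adj z ·)) (Q := (H.Adj x ·)) (S := (· ∈ A))
    (fun a b _ hza => by simpa using hH.symm.mem_of_mem_adj hzB (by simpa using hza))
    (fun a b hab hxb => by
      simpa using hH.symm.mem_of_mem_adj (hH.mem_of_mem_adj hxA (by simpa using hxb)) hab.symm)
    (by
      have := hdA x hxA
      have := hdB z hzB
      simp only [H.loopless.irrefl, decide_false, Bool.false_eq_true, if_false] at h1 h2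
      split_ifs at h3 <;> omega)
  have := H.symm
  refine ⟨a :: (s.reverse ++ b :: t),
    ((List.reverse_perm s).append_right _).cons _ |>.trans List.perm_middle.symm, ?_⟩
  rw [Cycle.chain_coe_cons, ← List.cons_append, List.isChain_append]
  refine ⟨hl.isChain.cons_reverse_append hx (by simpa using hxb), List.isChain_singleton _, ?_⟩
  have hlast : (a :: (s.reverse ++ b :: t)).getLast? = (s ++ a :: b :: t).getLast? := by
    rw [← List.cons_append, List.getLast?_append_of_ne_nil _ (List.cons_ne_nil _ _),
      List.getLast?_append_of_ne_nil _ (List.cons_ne_nil _ _), List.getLast?_cons_cons]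
  intro u hu v hv
  simp_all

end IsLongestPath

theorem IsBipartiteWith.exists_cycleChain [DecidableRel H.Adj] (hH : H.IsBipartiteWith A B)
    (hA : #A = k) (hB : #B = k) (hk : 0 < k) (hdA : ∀ a ∈ A, k < 2 * #{b ∈ B | H.Adj a b})
    (hdB : ∀ b ∈ B, k < 2 * #{a ∈ A | H.Adj b a}) :
    ∃ C : List V, C.Nodup ∧ C.length = 2 * k ∧ Cycle.Chain H.Adj (C : Cycle V) := by
  obtain ⟨l, hl⟩ := exists_isLongestPath fun _ => hH.length_le_of_isChain
  have hlen : 2 ≤ l.length := by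
    obtain ⟨a, ha⟩ : A.Nonempty := card_pos.mp (hA ▸ hk)
    obtain ⟨b, hb⟩ : {b ∈ B | H.Adj a b}.Nonempty := card_pos.mp (by have := hdA a ha; omega)
    rw [mem_filter] at hb
    exact hl.length_le (l' := [a, b]) (by simp [hb.2.ne]) (by simp [hb.2])
  have hne : l ≠ [] := by rintro rfl; simp at hlen
  obtain ⟨x, hx⟩ : ∃ x, x ∈ l.head? := ⟨_, List.head?_eq_some_head hne⟩
  obtain ⟨z, hz⟩ : ∃ z, z ∈ l.getLast? := ⟨_, List.getLast?_eq_some_getLast hne⟩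
  have hmem := fun u => hH.mem_union_of_mem_isChain hl.isChain hlen (u := u)
  wlog hxA : x ∈ A generalizing A B
  · have hxB := (mem_union.mp (hmem x (List.mem_of_mem_head? hx))).resolve_left hxA
    exact this hH.symm hB hA hdB hdA (fun u hu => union_comm A B ▸ hmem u hu) hxB
  have hzB : z ∈ B := (mem_union.mp (hmem z (List.mem_of_mem_getLast? hz))).resolve_left
    (hl.getLast_notMem_of_head_mem hH hA hB hdA hdB hx hxA hz)
  obtain ⟨C, hCl, hC⟩ := hl.exists_perm_cycleChain hH hA hdA hdB hx hxA hz hzB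
  have hl_eq : l.toFinset = A ∪ B := by
    ext u
    refine ⟨fun hu => hmem u (List.mem_toFinset.mp hu), fun hu => List.mem_toFinset.mpr ?_⟩
    rcases mem_union.mp hu with huA | huB
    · obtain ⟨b, hxb, hub⟩ := exists_adj_adj_of_card_lt (G := H) (B := B) (x := x) (w := u)
        (by have := hdA x hxA; have := hdA u huA; omega)
      exact hl.mem_of_adj_of_cycleChain hCl hC (hl.mem_of_adj_head hx hxb) hub.symm
    · obtain ⟨a, hza, hua⟩ := exists_adj_adj_of_card_lt (G := H) (B := A) (x := z) (w := u)
        (by have := hdB z hzB; have := hdB u huB; omega)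
      exact hl.mem_of_adj_of_cycleChain hCl hC (hl.mem_of_adj_getLast hz hza) hua.symm
  refine ⟨C, hCl.nodup_iff.mpr hl.nodup, ?_, hC⟩
  rw [hCl.length_eq, ← List.toFinset_card_of_nodup hl.nodup, hl_eq,
    card_union_of_disjoint (disjoint_coe.mp hH.disjoint), hA, hB, two_mul]

theorem hasCycleLen_two_mul_of_lt_two_mul_card_adj [DecidableRel G.Adj] (hAB : Disjoint A B)
    (hA : #A = k) (hB : #B = k) (hk : 2 ≤ k) (hdA : ∀ a ∈ A, k < 2 * #{b ∈ B | G.Adj a b})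
    (hdB : ∀ b ∈ B, k < 2 * #{a ∈ A | G.Adj b a}) : HasCycleLen G (2 * k) := by
  have hH := between_isBipartiteWith (G := G) (disjoint_coe.mpr hAB)
  obtain ⟨C, hnd, hlen, hC⟩ := hH.exists_cycleChain hA hB (by omega)
    (fun a ha => by
      rw [filter_congr (q := (G.Adj a ·)) fun b hb => by simp [between_adj, ha, hb]]
      exact hdA a ha)
    (fun b hb => by
      rw [filter_congr (q := (G.Adj b ·)) fun a ha => by simp [between_adj, ha, hb]]
      exact hdB b hb)
  exact hlen ▸ (hasCycleLen_of_cycleChain hC hnd (by omega)).mono between_le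

end Bipartite

theorem degIn_eq_card_filter [DecidableRel G.Adj] (S : Finset V) (v : V) :
    degIn G S v = #{u ∈ S | G.Adj v u} := by
  rw [degIn, ← Set.ncard_coe_finset, coe_filter]

theorem lt_two_mul_card_filter_adj [DecidableEq V] [DecidableRel G.Adj] {P Q : Finset V} {v : V}
    {c : ℝ} (hQP : Q ⊆ P) (hv : (#P : ℝ) - c ≤ degIn G P v) (hc : 4 * c + 2 ≤ 2 * (#Q : ℝ)) :
    #Q < 2 * #{u ∈ Q | G.Adj v u} := by
  have hsplit : #{u ∈ P | G.Adj v u} ≤ #{u ∈ Q | G.Adj v u} + #(P \ Q) := by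
    refine (card_le_card fun u hu => ?_).trans (card_union_le _ _)
    by_cases huQ : u ∈ Q <;> simp_all
  have hPQ : (#(P \ Q) : ℝ) + #Q = #P := by exact_mod_cast card_sdiff_add_card_eq_card hQP
  rw [degIn_eq_card_filter] at hv
  have : (#Q : ℝ) < 2 * #{u ∈ Q | G.Adj v u} := by
    have : (#{u ∈ P | G.Adj v u} : ℝ) ≤ #{u ∈ Q | G.Adj v u} + #(P \ Q) := by
      exact_mod_cast hsplit
    linarith
  exact_mod_cast this

end SimpleGraph

theorem almost_complete_bipartite_cycles_general {V : Type*} (G : SimpleGraph V)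
    (X Y : Finset V) (c : ℝ)
    (hdisj : Disjoint X Y)
    (hdX : ∀ x ∈ X, (Y.card : ℝ) - c ≤ (degIn G Y x : ℝ))
    (hdY : ∀ y ∈ Y, (X.card : ℝ) - c ≤ (degIn G X y : ℝ))
    (m : ℕ) (hme : Even m) (hm4 : 4 ≤ m) (hmc : 4 * c + 2 ≤ (m : ℝ))
    (hmm : m ≤ 2 * min X.card Y.card) :
    HasCycleLen G m := by
  classical
  obtain ⟨k, rfl⟩ := hme
  have := min_le_left X.card Y.card
  have := min_le_right X.card Y.card
  obtain ⟨A, hAX, hA⟩ := Finset.exists_subset_card_eq (s := X) (n := k) (by omega)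
  obtain ⟨B, hBY, hB⟩ := Finset.exists_subset_card_eq (s := Y) (n := k) (by omega)
  have hc : 4 * c + 2 ≤ 2 * (k : ℝ) := by push_cast at hmc; linarith
  rw [← two_mul]
  exact hasCycleLen_two_mul_of_lt_two_mul_card_adj (hdisj.mono hAX hBY) hA hB (by omega)
    (fun a ha => hB ▸ lt_two_mul_card_filter_adj hBY (hdX a (hAX ha)) (hB ▸ hc))
    (fun b hb => hA ▸ lt_two_mul_card_filter_adj hAX (hdY b (hBY hb)) (hA ▸ hc))

/-- A `c`-almost-complete bipartite graph contains cycles of every even length `m` with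
`max {4, 4c + 2} ≤ m ≤ 2 min {|X|, |Y|}`. -/
theorem almost_complete_bipartite_cycles {V : Type*} [Fintype V] (G : SimpleGraph V)
    (X Y : Finset V) (c : ℝ) (hc : 0 ≤ c)
    (hdisj : Disjoint X Y) (hcover : ∀ v : V, v ∈ X ∨ v ∈ Y)
    (hbip : ∀ u v : V, G.Adj u v → (u ∈ X ∧ v ∈ Y) ∨ (u ∈ Y ∧ v ∈ X))
    (hdX : ∀ x ∈ X, (Y.card : ℝ) - c ≤ (degIn G Y x : ℝ))
    (hdY : ∀ y ∈ Y, (X.card : ℝ) - c ≤ (degIn G X y : ℝ))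
    (m : ℕ) (hme : Even m) (hm4 : 4 ≤ m) (hmc : 4 * c + 2 ≤ (m : ℝ))
    (hmm : m ≤ 2 * min X.card Y.card) :
    HasCycleLen G m :=
  almost_complete_bipartite_cycles_general G X Y c hdisj hdX hdY m hme hm4 hmc hmm
end

section
/- For any graph G on K vertices and any integer m with 3 ≤ m ≤ K, if the average degree of G is at least m, then G contains a connected-matching on at least m vertices. -/
open SimpleGraph

/-!
In each connected component `S`, take a maximum matching `M`, with matched vertices `T` and
unmatched vertices `U = S \ T`. By maximality `U` is independent, and the two ends of an edge of
`M` cannot be joined to two distinct vertices of `U` (that would be an augmenting path), so each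
edge of `M` sends at most `|U| + 1` edges to `U`. Hence the component has at most
`|M| (|T| - 1) + |M| (|U| + 1) = |M| |S|` edges. If every connected matching covers fewer than
`m` vertices, then `2 |M| ≤ m - 1` in every component, and summing gives `2 e(G) ≤ (m - 1) K`,
against the average degree being at least `m`.
-/

section Matching

variable {V : Type*} [DecidableEq V]

def endpoints (e : V × V) : Finset V := {e.1, e.2}

def matchedVerts (M : Finset (V × V)) : Finset V := M.biUnion endpoints

lemma mem_matchedVerts {M : Finset (V × V)} {v : V} :
    v ∈ matchedVerts M ↔ ∃ e ∈ M, v ∈ endpoints e :=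
  Finset.mem_biUnion

lemma endpoints_subset_matchedVerts {M : Finset (V × V)} {e : V × V} (he : e ∈ M) :
    endpoints e ⊆ matchedVerts M :=
  Finset.subset_biUnion_of_mem endpoints he

lemma matchedVerts_mono {M M' : Finset (V × V)} (h : M' ⊆ M) :
    matchedVerts M' ⊆ matchedVerts M :=
  Finset.biUnion_subset_biUnion_of_subset_left _ h

lemma matchedVerts_insert (e : V × V) (M : Finset (V × V)) :
    matchedVerts (insert e M) = endpoints e ∪ matchedVerts M :=
  Finset.biUnion_insert

lemma fst_mem_matchedVerts {M : Finset (V × V)} {e : V × V} (he : e ∈ M) :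
    e.1 ∈ matchedVerts M :=
  endpoints_subset_matchedVerts he (by simp [endpoints])

lemma snd_mem_matchedVerts {M : Finset (V × V)} {e : V × V} (he : e ∈ M) :
    e.2 ∈ matchedVerts M :=
  endpoints_subset_matchedVerts he (by simp [endpoints])

lemma notMem_of_fst_notMem_matchedVerts {M : Finset (V × V)} {u v : V}
    (hu : u ∉ matchedVerts M) : (u, v) ∉ M :=
  fun h => hu (fst_mem_matchedVerts h)

structure IsMatchingIn (G : SimpleGraph V) (S : Finset V) (M : Finset (V × V)) : Prop where
  adj : ∀ e ∈ M, G.Adj e.1 e.2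
  matchedVerts_subset : matchedVerts M ⊆ S
  pairwiseDisjoint : (M : Set (V × V)).PairwiseDisjoint endpoints

def IsMaxMatchingIn (G : SimpleGraph V) (S : Finset V) (M : Finset (V × V)) : Prop :=
  IsMatchingIn G S M ∧ ∀ M', IsMatchingIn G S M' → M'.card ≤ M.card

variable {G : SimpleGraph V} {S : Finset V} {M : Finset (V × V)}

namespace IsMatchingIn

lemma card_matchedVerts (hM : IsMatchingIn G S M) : (matchedVerts M).card = 2 * M.card := by
  rw [matchedVerts, Finset.card_biUnion fun e he f hf hef => hM.pairwiseDisjoint he hf hef,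
    Finset.sum_const_nat (m := 2) (f := fun e => (endpoints e).card)
      fun e he => Finset.card_pair (hM.adj e he).ne, mul_comm]

lemma fst_mem (hM : IsMatchingIn G S M) {e : V × V} (he : e ∈ M) : e.1 ∈ S :=
  hM.matchedVerts_subset (fst_mem_matchedVerts he)

lemma snd_mem (hM : IsMatchingIn G S M) {e : V × V} (he : e ∈ M) : e.2 ∈ S :=
  hM.matchedVerts_subset (snd_mem_matchedVerts he)

lemma subset (hM : IsMatchingIn G S M) {M' : Finset (V × V)} (h : M' ⊆ M) :
    IsMatchingIn G S M' where
  adj e he := hM.adj e (h he)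
  matchedVerts_subset := (matchedVerts_mono h).trans hM.matchedVerts_subset
  pairwiseDisjoint := hM.pairwiseDisjoint.subset (by exact_mod_cast h)

lemma insert (hM : IsMatchingIn G S M) {u v : V} (huv : G.Adj u v) (hu : u ∈ S) (hv : v ∈ S)
    (hu' : u ∉ matchedVerts M) (hv' : v ∉ matchedVerts M) :
    IsMatchingIn G S (insert (u, v) M) where
  adj e he := by
    rcases Finset.mem_insert.1 he with rfl | he
    exacts [huv, hM.adj e he]
  matchedVerts_subset := by
    rw [matchedVerts_insert]
    refine Finset.union_subset ?_ hM.matchedVerts_subset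
    simp [endpoints, Finset.insert_subset_iff, hu, hv]
  pairwiseDisjoint := by
    rw [Finset.coe_insert]
    refine hM.pairwiseDisjoint.insert fun f hf _ => ?_
    refine Finset.disjoint_of_subset_right (endpoints_subset_matchedVerts hf) ?_
    simp [endpoints, hu', hv']

lemma notMem_matchedVerts_erase (hM : IsMatchingIn G S M) {e : V × V} (he : e ∈ M) {v : V}
    (hv : v ∈ endpoints e) : v ∉ matchedVerts (M.erase e) := by
  rw [mem_matchedVerts]
  rintro ⟨f, hf, hvf⟩
  exact Finset.disjoint_left.1
    (hM.pairwiseDisjoint he (Finset.mem_of_mem_erase hf) (Finset.ne_of_mem_erase hf).symm) hv hvf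

lemma isConnMatching (hM : IsMatchingIn G S M)
    (hS : ∀ x ∈ S, ∀ y ∈ S, G.Reachable x y) : IsConnMatching G M := by
  refine ⟨hM.adj, fun e he f hf hef => ?_, fun e he f hf => hS _ (hM.fst_mem he) _ (hM.fst_mem hf)⟩
  have := hM.pairwiseDisjoint he hf hef
  simp only [Function.onFun, endpoints, Finset.disjoint_insert_left, Finset.disjoint_insert_right,
    Finset.disjoint_singleton_left, Finset.mem_insert, Finset.mem_singleton] at this
  grind

end IsMatchingIn

lemma exists_isMaxMatchingIn (G : SimpleGraph V) (S : Finset V) : ∃ M, IsMaxMatchingIn G S M := by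
  classical
  have hbound : ∀ M, IsMatchingIn G S M → M ∈ (S ×ˢ S).powerset := fun M hM =>
    Finset.mem_powerset.2 fun e he => Finset.mem_product.2 ⟨hM.fst_mem he, hM.snd_mem he⟩
  have hempty : IsMatchingIn G S ∅ := ⟨by simp, by simp [matchedVerts], by simp⟩
  obtain ⟨M, hM, hmax⟩ := Finset.exists_max_image ((S ×ˢ S).powerset.filter (IsMatchingIn G S))
    Finset.card ⟨∅, Finset.mem_filter.2 ⟨hbound _ hempty, hempty⟩⟩
  exact ⟨M, (Finset.mem_filter.1 hM).2,
    fun M' hM' => hmax M' (Finset.mem_filter.2 ⟨hbound _ hM', hM'⟩)⟩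

namespace IsMaxMatchingIn

lemma not_adj (hM : IsMaxMatchingIn G S M) {u v : V} (hu : u ∈ S) (hv : v ∈ S)
    (hu' : u ∉ matchedVerts M) (hv' : v ∉ matchedVerts M) : ¬ G.Adj u v := fun huv => by
  have := hM.2 _ (hM.1.insert huv hu hv hu' hv')
  rw [Finset.card_insert_of_notMem (notMem_of_fst_notMem_matchedVerts hu')] at this
  omega

/-- There is no augmenting path of length three. -/
lemma not_adj_adj (hM : IsMaxMatchingIn G S M) {e : V × V} (he : e ∈ M) {x y : V}
    (hx : x ∈ S \ matchedVerts M) (hy : y ∈ S \ matchedVerts M) (hxy : x ≠ y)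
    (hex : G.Adj e.1 x) : ¬ G.Adj e.2 y := by
  -- Rematching `e.1` to `x` gives another maximum matching, in which `e.2` and `y` are free.
  rw [Finset.mem_sdiff] at hx hy
  have hfree : ∀ v ∉ matchedVerts M, v ∉ matchedVerts (M.erase e) := fun v hv hv' =>
    hv (matchedVerts_mono (Finset.erase_subset e M) hv')
  have he₁ : e.1 ∉ matchedVerts (M.erase e) :=
    hM.1.notMem_matchedVerts_erase he (by simp [endpoints])
  have he₂ : e.2 ∉ matchedVerts (M.erase e) :=
    hM.1.notMem_matchedVerts_erase he (by simp [endpoints])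
  set M₁ := insert (e.1, x) (M.erase e)
  have hM₁ : IsMatchingIn G S M₁ :=
    (hM.1.subset (Finset.erase_subset e M)).insert hex (hM.1.fst_mem he) hx.1 he₁ (hfree x hx.2)
  have hcard : M₁.card = M.card := by
    rw [Finset.card_insert_of_notMem (notMem_of_fst_notMem_matchedVerts he₁),
      Finset.card_erase_add_one he]
  have hmax₁ : IsMaxMatchingIn G S M₁ := ⟨hM₁, fun M' hM' => hcard ▸ hM.2 M' hM'⟩
  have hfree₁ : ∀ v ∉ matchedVerts (M.erase e), v ≠ e.1 → v ≠ x → v ∉ matchedVerts M₁ := by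
    intro v hv h1 h2
    simp [M₁, matchedVerts_insert, endpoints, h1, h2, hv]
  have hy₁ : y ≠ e.1 := fun h => hy.2 (h ▸ fst_mem_matchedVerts he)
  have he₂x : e.2 ≠ x := fun h => hx.2 (h ▸ snd_mem_matchedVerts he)
  exact hmax₁.not_adj (hM.1.snd_mem he) hy.1 (hfree₁ _ he₂ (hM.1.adj e he).ne.symm he₂x)
    (hfree₁ _ (hfree y hy.2) hy₁ hxy.symm)

end IsMaxMatchingIn

section Counting

variable [DecidableRel G.Adj]

lemma interedges_union_left (s₁ s₂ t : Finset V) :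
    G.interedges (s₁ ∪ s₂) t = G.interedges s₁ t ∪ G.interedges s₂ t := by
  simp only [interedges_def, Finset.union_product, Finset.filter_union]

lemma interedges_union_right (s t₁ t₂ : Finset V) :
    G.interedges s (t₁ ∪ t₂) = G.interedges s t₁ ∪ G.interedges s t₂ := by
  simp only [interedges_def, Finset.product_union, Finset.filter_union]

lemma IsMaxMatchingIn.card_interedges_endpoints_le (hM : IsMaxMatchingIn G S M) {e : V × V}
    (he : e ∈ M) :
    (G.interedges (endpoints e) (S \ matchedVerts M)).card ≤ (S \ matchedVerts M).card + 1 := by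
  set U := S \ matchedVerts M
  have hsplit : G.interedges (endpoints e) U = G.interedges {e.1} U ∪ G.interedges {e.2} U := by
    rw [endpoints, Finset.insert_eq, interedges_union_left]
  have hle : ∀ v, (G.interedges {v} U).card ≤ U.card := fun v =>
    (G.card_interedges_le_mul _ _).trans_eq (by rw [Finset.card_singleton, one_mul])
  refine (Finset.card_le_card hsplit.le).trans ((Finset.card_union_le _ _).trans ?_)
  by_cases h : ∃ y ∈ U, G.Adj e.2 y
  · obtain ⟨y, hy, hey⟩ := h
    have hone : G.interedges {e.1} U ⊆ {(e.1, y)} := by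
      rintro ⟨a, x⟩ hp
      obtain ⟨ha, hx, hax⟩ := G.mem_interedges_iff.1 hp
      rw [Finset.mem_singleton] at ha ⊢
      subst ha
      by_contra hxy
      exact hM.not_adj_adj he hx hy (fun h => hxy (h ▸ rfl)) hax hey
    have := Finset.card_le_card hone
    rw [Finset.card_singleton] at this
    have := hle e.2
    omega
  · push Not at h
    have hempty : G.interedges {e.2} U = ∅ := Finset.eq_empty_of_forall_notMem fun p hp => by
      obtain ⟨hb, hx, hbx⟩ := G.mem_interedges_iff.1 hp
      rw [Finset.mem_singleton] at hb
      exact h _ hx (hb ▸ hbx)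
    rw [hempty, Finset.card_empty]
    exact (hle e.1).trans (Nat.le_succ _)

lemma IsMaxMatchingIn.card_interedges_le (hM : IsMaxMatchingIn G S M) :
    (G.interedges S S).card ≤ 2 * M.card * S.card := by
  set T := matchedVerts M
  set U := S \ T
  have hS : S = T ∪ U := (Finset.union_sdiff_of_subset hM.1.matchedVerts_subset).symm
  have hT : T.card = 2 * M.card := hM.1.card_matchedVerts
  have hSc : S.card = T.card + U.card := by
    rw [hS, Finset.card_union_of_disjoint Finset.disjoint_sdiff]
  have hTT : (G.interedges T T).card + T.card ≤ T.card * T.card := by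
    have h := Finset.card_le_card (s := G.interedges T T) (t := T.offDiag) fun p hp => by
      obtain ⟨h1, h2, hadj⟩ := G.mem_interedges_iff.1 hp
      exact Finset.mem_offDiag.2 ⟨h1, h2, hadj.ne⟩
    rw [Finset.offDiag_card] at h
    have := Nat.le_mul_self T.card
    omega
  have hTU : (G.interedges T U).card ≤ M.card * (U.card + 1) := by
    rw [show T = M.biUnion endpoints from rfl, interedges_biUnion_left]
    refine Finset.card_biUnion_le.trans ?_
    rw [← smul_eq_mul, ← Finset.sum_const]
    exact Finset.sum_le_sum fun e he => hM.card_interedges_endpoints_le he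
  have hUT : (G.interedges U T).card = (G.interedges T U).card :=
    have : Std.Symm G.Adj := ⟨fun _ _ h => h.symm⟩
    Rel.card_interedges_comm U T
  have hUU : G.interedges U U = ∅ := Finset.eq_empty_of_forall_notMem fun p hp => by
    obtain ⟨h1, h2, hadj⟩ := G.mem_interedges_iff.1 hp
    rw [Finset.mem_sdiff] at h1 h2
    exact hM.not_adj h1.1 h2.1 h1.2 h2.2 hadj
  have hsum : (G.interedges S S).card ≤ (G.interedges T T).card + (G.interedges T U).card +
      ((G.interedges U T).card + (G.interedges U U).card) := by
    rw [hS, interedges_union_left, interedges_union_right, interedges_union_right]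
    refine (Finset.card_union_le _ _).trans (add_le_add ?_ ?_) <;> exact Finset.card_union_le _ _
  rw [hUU, Finset.card_empty, hUT] at hsum
  rw [hSc, hT] at *
  nlinarith

end Counting

end Matching

lemma two_mul_card_edgeFinset_le_of_forall_isConnMatching {V : Type*} [Fintype V]
    [DecidableEq V] (G : SimpleGraph V) [DecidableRel G.Adj] {k : ℕ}
    (hk : ∀ M, IsConnMatching G M → 2 * M.card ≤ k) :
    2 * G.edgeFinset.card ≤ k * Fintype.card V := by
  classical
  let P := Finpartition.ofSetoid G.reachableSetoid
  have hpart : ∀ t ∈ P.parts, ∀ x ∈ t, ∀ y, y ∈ t ↔ G.Reachable x y := fun t ht x hx y => by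
    rw [← P.part_eq_of_mem ht hx, Finpartition.mem_part_ofSetoid_iff_rel]
    rfl
  have hcomp : ∀ t ∈ P.parts, (G.interedges t Finset.univ).card ≤ k * t.card := by
    intro t ht
    obtain ⟨M, hM⟩ := exists_isMaxMatchingIn G t
    have hclosed : G.interedges t Finset.univ = G.interedges t t := by
      ext ⟨x, y⟩
      simp only [mk_mem_interedges_iff, Finset.mem_univ, true_and, and_congr_right_iff]
      exact fun hx => ⟨fun hxy => ⟨(hpart t ht x hx y).2 hxy.reachable, hxy⟩, And.right⟩
    have hconn := hM.1.isConnMatching fun x hx y hy => (hpart t ht x hx y).1 hy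
    rw [hclosed]
    exact hM.card_interedges_le.trans (Nat.mul_le_mul_right _ (hk M hconn))
  calc 2 * G.edgeFinset.card = (G.interedges Finset.univ Finset.univ).card := by
        rw [two_mul_card_edgeFinset, interedges_def, Finset.univ_product_univ]
    _ = ∑ t ∈ P.parts, (G.interedges t Finset.univ).card :=
        Rel.card_interedges_finpartition_left _ P _
    _ ≤ ∑ t ∈ P.parts, k * t.card := Finset.sum_le_sum hcomp
    _ = k * Fintype.card V := by rw [← Finset.mul_sum, P.sum_card_parts, Finset.card_univ]

theorem avg_degree_connected_matching_general {V : Type*} [Fintype V] (G : SimpleGraph V) (m : ℕ)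
    (havg : (m : ℝ) ≤ 2 * (G.edgeSet.ncard : ℝ) / (Fintype.card V : ℝ)) :
    HasConnMatching G (m : ℝ) := by
  classical
  by_contra hcon
  have hlt : ∀ M, IsConnMatching G M → 2 * M.card < m := fun M hM => by
    have : ¬ (m : ℝ) ≤ 2 * (M.card : ℝ) := fun h => hcon ⟨M, hM, h⟩
    exact_mod_cast not_le.1 this
  have hm : 0 < m := by simpa using hlt ∅ ⟨by simp, by simp, by simp⟩
  have hedges := two_mul_card_edgeFinset_le_of_forall_isConnMatching G
    (k := m - 1) fun M hM => Nat.le_sub_one_of_lt (hlt M hM)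
  have hV : 0 < Fintype.card V := by
    by_contra h
    rw [Nat.eq_zero_of_not_pos h, Nat.cast_zero, div_zero] at havg
    exact hm.ne' (by exact_mod_cast havg.antisymm (Nat.cast_nonneg m))
  rw [← coe_edgeFinset, Set.ncard_coe_finset, le_div_iff₀ (by exact_mod_cast hV)] at havg
  have hmn : m * Fintype.card V ≤ (m - 1) * Fintype.card V :=
    le_trans (by exact_mod_cast havg) hedges
  have := Nat.le_of_mul_le_mul_right hmn hV
  omega

/-- A graph on `K` vertices with average degree at least `m` (where `3 ≤ m ≤ K`) contains a
connected-matching on at least `m` vertices. -/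
theorem avg_degree_connected_matching {V : Type*} [Fintype V] (G : SimpleGraph V) (m : ℕ)
    (hm3 : 3 ≤ m) (hmK : m ≤ Fintype.card V)
    (havg : (m : ℝ) ≤ 2 * (G.edgeSet.ncard : ℝ) / (Fintype.card V : ℝ)) :
    HasConnMatching G (m : ℝ) :=
  avg_degree_connected_matching_general G m havg
end

section
/- Let G = G[V1, V2] be a bipartite graph with parts V1 and V2, and let ℓ be a positive integer with |V1| ≥ |V2| ≥ ℓ. If G is a-almost-complete for some a with 0 < a/ℓ < 0.5, then G contains a connected-matching on at least 2|V2| − 2a vertices. -/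
/-!
Greedily matching the vertices of `V₂` into `V₁` only gets stuck once fewer than `a` vertices of
`V₂` are left unmatched: an unmatched `w ∈ V₂` misses at most `a` vertices of `V₁`, while more
than `a` vertices of `V₁` are still free since `|V₂| ≤ |V₁|`. The matching is connected because
`2a < |V₂|`, so any two vertices of `V₁`, each missing at most `a` vertices of `V₂`, have a common
neighbour.
-/

open SimpleGraph

open Finset

section CrossMatching

variable {V : Type*} (G : SimpleGraph V)

def IsCrossMatching (A B : Finset V) (M : Finset (V × V)) : Prop :=
  (∀ e ∈ M, e.1 ∈ A ∧ e.2 ∈ B ∧ G.Adj e.1 e.2) ∧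
    Set.InjOn Prod.fst (M : Set (V × V)) ∧ Set.InjOn Prod.snd (M : Set (V × V))

theorem degIn_eq_card_filter [DecidableRel G.Adj] (S : Finset V) (v : V) :
    degIn G S v = #{u ∈ S | G.Adj v u} := by
  rw [degIn, ← Set.ncard_coe_finset, coe_filter]

variable {G}

theorem IsCrossMatching.exists_card_succ {A B : Finset V} {M : Finset (V × V)}
    {a : ℝ} (hM : IsCrossMatching G A B M) (hBA : #B ≤ #A) (ha : 0 ≤ a)
    (hdeg : ∀ v ∈ B, (#A : ℝ) - a ≤ degIn G A v) (hsmall : (#M : ℝ) < #B - a) :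
    ∃ M', IsCrossMatching G A B M' ∧ #M' = #M + 1 := by
  classical
  obtain ⟨hedge, hfst, hsnd⟩ := hM
  have hfst_sub : M.image Prod.fst ⊆ A := fun x hx => by
    obtain ⟨e, he, rfl⟩ := mem_image.mp hx
    exact (hedge e he).1
  have hsnd_sub : M.image Prod.snd ⊆ B := fun x hx => by
    obtain ⟨e, he, rfl⟩ := mem_image.mp hx
    exact (hedge e he).2.1
  have hfst_card := card_image_of_injOn hfst
  have hsnd_card := card_image_of_injOn hsnd
  obtain ⟨w, hw⟩ : (B \ M.image Prod.snd).Nonempty := by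
    rw [← card_pos, card_sdiff_of_subset hsnd_sub, hsnd_card]
    have : #M < #B := by exact_mod_cast (by linarith : (#M : ℝ) < #B)
    omega
  obtain ⟨hwB, hw_free⟩ := mem_sdiff.mp hw
  obtain ⟨u, hu⟩ : ({x ∈ A | G.Adj w x} ∩ (A \ M.image Prod.fst)).Nonempty := by
    refine inter_nonempty_of_card_lt_card_add_card (filter_subset _ _) sdiff_subset ?_
    have hN : (#A : ℝ) - a ≤ #{x ∈ A | G.Adj w x} := by
      have := hdeg w hwB
      rwa [degIn_eq_card_filter] at this
    have hfree : (#(A \ M.image Prod.fst) : ℝ) = #A - #M := by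
      rw [card_sdiff_of_subset hfst_sub, hfst_card,
        Nat.cast_sub (hfst_card ▸ card_le_card hfst_sub)]
    have : (#B : ℝ) ≤ #A := by exact_mod_cast hBA
    have : (#A : ℝ) < #{x ∈ A | G.Adj w x} + #(A \ M.image Prod.fst) := by linarith
    exact_mod_cast this
  simp only [mem_inter, mem_filter, mem_sdiff] at hu
  obtain ⟨⟨huA, hwu⟩, -, hu_free⟩ := hu
  have hnew : (u, w) ∉ M := fun h => hu_free (mem_image_of_mem Prod.fst h)
  refine ⟨insert (u, w) M, ⟨?_, ?_, ?_⟩, card_insert_of_notMem hnew⟩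
  · simpa [huA, hwB, hwu.symm] using hedge
  · rw [coe_insert, Set.injOn_insert (mod_cast hnew)]
    exact ⟨hfst, by simpa using hu_free⟩
  · rw [coe_insert, Set.injOn_insert (mod_cast hnew)]
    exact ⟨hsnd, by simpa using hw_free⟩

theorem exists_isCrossMatching_card_ge {A B : Finset V} {a : ℝ} (hBA : #B ≤ #A) (ha : 0 ≤ a)
    (hdeg : ∀ v ∈ B, (#A : ℝ) - a ≤ degIn G A v) :
    ∃ M, IsCrossMatching G A B M ∧ (#B : ℝ) - a ≤ #M := by
  classical
  set candidates := (A ×ˢ B).powerset.filter (IsCrossMatching G A B)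
  have hmem : ∀ {M}, IsCrossMatching G A B M → M ∈ candidates := fun hM =>
    mem_filter.mpr ⟨mem_powerset.mpr fun e he => mem_product.mpr
      ⟨(hM.1 e he).1, (hM.1 e he).2.1⟩, hM⟩
  obtain ⟨M, hM, hmax⟩ := candidates.exists_max_image card
    ⟨∅, hmem ⟨by simp, by simp, by simp⟩⟩
  replace hM := (mem_filter.mp hM).2
  refine ⟨M, hM, not_lt.mp fun hsmall => ?_⟩
  obtain ⟨M', hM', hcard⟩ := hM.exists_card_succ hBA ha hdeg hsmall
  have := hmax M' (hmem hM')
  omega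

theorem reachable_of_degIn_ge {B : Finset V} {a : ℝ} {u v : V} (hB : 2 * a < #B)
    (hu : (#B : ℝ) - a ≤ degIn G B u) (hv : (#B : ℝ) - a ≤ degIn G B v) : G.Reachable u v := by
  classical
  rw [degIn_eq_card_filter] at hu hv
  obtain ⟨w, hw⟩ := inter_nonempty_of_card_lt_card_add_card
    (filter_subset (G.Adj u) B) (filter_subset (G.Adj v) B) (by exact_mod_cast (by linarith :
      (#B : ℝ) < #{x ∈ B | G.Adj u x} + #{x ∈ B | G.Adj v x}))
  simp only [mem_inter, mem_filter] at hw
  exact hw.1.2.reachable.trans hw.2.2.reachable.symm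

theorem IsCrossMatching.isConnMatching {A B : Finset V} {M : Finset (V × V)}
    (hM : IsCrossMatching G A B M) (hAB : Disjoint A B)
    (hreach : ∀ u ∈ A, ∀ v ∈ A, G.Reachable u v) : IsConnMatching G M := by
  obtain ⟨hedge, hfst, hsnd⟩ := hM
  refine ⟨fun e he => (hedge e he).2.2, fun e he f hf hef => ⟨?_, ?_, ?_, ?_⟩,
    fun e he f hf => hreach _ (hedge e he).1 _ (hedge f hf).1⟩
  · exact fun h => hef (hfst he hf h)
  · exact fun h => disjoint_left.mp hAB (hedge e he).1 (h ▸ (hedge f hf).2.1)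
  · exact fun h => disjoint_left.mp hAB (hedge f hf).1 (h ▸ (hedge e he).2.1)
  · exact fun h => hef (hsnd he hf h)

end CrossMatching

theorem almost_complete_bipartite_matching_general {V : Type*} (G : SimpleGraph V) (V₁ V₂ : Finset V)
    (a : ℝ) (ℓ : ℕ)
    (hdisj : Disjoint V₁ V₂)
    (h21 : V₂.card ≤ V₁.card) (hℓ2 : ℓ ≤ V₂.card)
    (ha0 : 0 < a / ℓ) (ha : a / ℓ < 0.5)
    (hd₁ : ∀ v ∈ V₁, (V₂.card : ℝ) - a ≤ (degIn G V₂ v : ℝ))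
    (hd₂ : ∀ v ∈ V₂, (V₁.card : ℝ) - a ≤ (degIn G V₁ v : ℝ)) :
    HasConnMatching G (2 * (V₂.card : ℝ) - 2 * a) := by
  have hℓ : (0 : ℝ) < ℓ := Nat.cast_pos.mpr (Nat.pos_of_ne_zero fun h => by simp [h] at ha0)
  have ha_pos : 0 < a := (div_pos_iff_of_pos_right hℓ).mp ha0
  have h2a : 2 * a < V₂.card := by
    have := (div_lt_iff₀ hℓ).mp ha
    have : (ℓ : ℝ) ≤ V₂.card := by exact_mod_cast hℓ2
    linarith
  obtain ⟨M, hM, hcard⟩ := exists_isCrossMatching_card_ge h21 ha_pos.le hd₂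
  have hreach : ∀ u ∈ V₁, ∀ v ∈ V₁, G.Reachable u v := fun u hu v hv =>
    reachable_of_degIn_ge h2a (hd₁ u hu) (hd₁ v hv)
  exact ⟨M, hM.isConnMatching hdisj hreach, by linarith⟩

/-- An `a`-almost-complete bipartite graph with `|V₁| ≥ |V₂| ≥ ℓ` and `0 < a/ℓ < 1/2` contains
a connected-matching on at least `2|V₂| - 2a` vertices. -/
theorem almost_complete_bipartite_matching {V : Type*} (G : SimpleGraph V) (V₁ V₂ : Finset V)
    (a : ℝ) (ℓ : ℕ) (hℓ : 0 < ℓ)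
    (hdisj : Disjoint V₁ V₂)
    (hbip : ∀ u v : V, G.Adj u v → (u ∈ V₁ ∧ v ∈ V₂) ∨ (u ∈ V₂ ∧ v ∈ V₁))
    (h21 : V₂.card ≤ V₁.card) (hℓ2 : ℓ ≤ V₂.card)
    (ha0 : 0 < a / ℓ) (ha : a / ℓ < 0.5)
    (hd₁ : ∀ v ∈ V₁, (V₂.card : ℝ) - a ≤ (degIn G V₂ v : ℝ))
    (hd₂ : ∀ v ∈ V₂, (V₁.card : ℝ) - a ≤ (degIn G V₁ v : ℝ)) :
    HasConnMatching G (2 * (V₂.card : ℝ) - 2 * a) :=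
  almost_complete_bipartite_matching_general G V₁ V₂ a ℓ hdisj h21 hℓ2 ha0 ha hd₁ hd₂
end
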